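/- For all real θ with 0 < θ < π/2, we have √(2 − 2cos θ) < θ − θ³/25. -/
import Mathlib


open Real

private lemma sin_lower {x : ℝ} (hx : 0 ≤ x) : x - x ^ 3 / 6 ≤ Real.sin x := by
  have hmono : MonotoneOn (fun x : ℝ => Real.sin x - x + x ^ 3 / 6) (Set.Ici 0) := by
    apply monotoneOn_of_deriv_nonneg (convex_Ici 0)
    · fun_prop
    · intro y hy
      exact (((Real.differentiable_sin y).sub (differentiable_id y)).add
        (((differentiable_pow 3) y).div_const 6)).differentiableWithinAt
    · intro y hy
      have hd : HasDerivAt (fun x : ℝ => Real.sin x - x + x ^ 3 / 6)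
          (Real.cos y - 1 + (3 * y ^ 2) / 6) y := by
        exact ((Real.hasDerivAt_sin y).sub (hasDerivAt_id y)).add
          ((hasDerivAt_pow 3 y).div_const 6) |>.congr_deriv (by norm_num)
      rw [hd.deriv]
      have := Real.one_sub_sq_div_two_le_cos (x := y)
      nlinarith
  have h0 : (0:ℝ) ∈ Set.Ici (0:ℝ) := by simp
  have := hmono h0 (Set.mem_Ici.mpr hx) hx
  simp at this
  nlinarith [this]

private lemma cos_upper {x : ℝ} (hx : 0 ≤ x) : Real.cos x ≤ 1 - x ^ 2 / 2 + x ^ 4 / 24 := by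
  have hmono : MonotoneOn (fun x : ℝ => 1 - x ^ 2 / 2 + x ^ 4 / 24 - Real.cos x) (Set.Ici 0) := by
    apply monotoneOn_of_deriv_nonneg (convex_Ici 0)
    · fun_prop
    · intro y hy
      exact ((((differentiable_const (1:ℝ)).sub ((differentiable_pow 2).div_const 2)).add
        ((differentiable_pow 4).div_const 24)).sub Real.differentiable_cos y).differentiableWithinAt
    · intro y hy
      have hy0 : 0 ≤ y := le_of_lt (by simpa using hy)
      have hd : HasDerivAt (fun x : ℝ => 1 - x ^ 2 / 2 + x ^ 4 / 24 - Real.cos x)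
          (0 - (2 * y ^ 1) / 2 + (4 * y ^ 3) / 24 - (-Real.sin y)) y := by
        exact (((hasDerivAt_const y (1:ℝ)).sub ((hasDerivAt_pow 2 y).div_const 2)).add
          ((hasDerivAt_pow 4 y).div_const 24)).sub (Real.hasDerivAt_cos y)
      rw [hd.deriv]
      have := sin_lower hy0
      nlinarith
  have h0 : (0:ℝ) ∈ Set.Ici (0:ℝ) := by simp
  have := hmono h0 (Set.mem_Ici.mpr hx) hx
  simp at this
  nlinarith [this]

private lemma sin_upper {x : ℝ} (hx : 0 ≤ x) :
    Real.sin x ≤ x - x ^ 3 / 6 + x ^ 5 / 120 := by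
  have hmono : MonotoneOn (fun x : ℝ => x - x ^ 3 / 6 + x ^ 5 / 120 - Real.sin x)
      (Set.Ici 0) := by
    apply monotoneOn_of_deriv_nonneg (convex_Ici 0)
    · fun_prop
    · intro y hy
      exact ((((differentiable_id).sub ((differentiable_pow 3).div_const 6)).add
        ((differentiable_pow 5).div_const 120)).sub Real.differentiable_sin y).differentiableWithinAt
    · intro y hy
      have hy0 : 0 ≤ y := le_of_lt (by simpa using hy)
      have hd : HasDerivAt (fun x : ℝ => x - x ^ 3 / 6 + x ^ 5 / 120 - Real.sin x)
          (1 - (3 * y ^ 2) / 6 + (5 * y ^ 4) / 120 - Real.cos y) y := by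
        exact (((hasDerivAt_id y).sub ((hasDerivAt_pow 3 y).div_const 6)).add
          ((hasDerivAt_pow 5 y).div_const 120)).sub (Real.hasDerivAt_sin y)
      rw [hd.deriv]
      have := cos_upper hy0
      nlinarith
  have h0 : (0:ℝ) ∈ Set.Ici (0:ℝ) := by simp
  have := hmono h0 (Set.mem_Ici.mpr hx) hx
  simp at this
  nlinarith [this]

theorem chord_upper_bound (θ : ℝ) (h0 : 0 < θ) (h1 : θ < π / 2) :
    Real.sqrt (2 - 2 * Real.cos θ) < θ - θ ^ 3 / 25 := by
  have hpi : π < 3.15 := Real.pi_lt_d2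
  have hθ : θ < 1.575 := by linarith
  have hhalf0 : 0 ≤ θ / 2 := by linarith
  have hhalfpi : θ / 2 ≤ π := by nlinarith [Real.pi_gt_three]
  have hsin_nonneg : 0 ≤ Real.sin (θ / 2) :=
    Real.sin_nonneg_of_nonneg_of_le_pi hhalf0 hhalfpi
  have hsq : Real.sin (θ / 2) ^ 2 = 1 / 2 - Real.cos (2 * (θ / 2)) / 2 :=
    Real.sin_sq_eq_half_sub (θ / 2)
  rw [show 2 * (θ / 2) = θ by ring] at hsq
  have h2 : 2 - 2 * Real.cos θ = (2 * Real.sin (θ / 2)) ^ 2 := by nlinarith [hsq]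
  rw [h2, Real.sqrt_sq (by linarith)]
  have hup := sin_upper hhalf0
  have hkey : 0 < θ ^ 3 * (3.2 - θ ^ 2) :=
    mul_pos (pow_pos h0 3) (by nlinarith)
  nlinarith [hup, hkey]
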